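/- arXiv:2003.03924 — 2 statements merged into one kernel-verified Lean document; each statement's English description precedes it below -/
import Mathlib

section
/- Two-sided performance difference bound: for any Q, f : S × A → ℝ, |J(π_f) − J(π_Q)| ≤ 2·max{ (E_{d_{π_f}}[TQ − Q] + E_{d_{π_Q}}[Q − TQ])/(1-γ), (E_{d_{π_Q}}[Tf − f] + E_{d_{π_f}}[f − Tf])/(1-γ) }. -/
open scoped BigOperators

/-- Time-`t` state-action marginal distribution of a policy in a finite MDP. -/
noncomputable def marg {S A : Type*} [Fintype S] [Fintype A]
    (d0 : S → ℝ) (P : S → A → S → ℝ) (pol : S → A → ℝ) : ℕ → S → A → ℝ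
  | 0 => fun s a => d0 s * pol s a
  | (t + 1) => fun s' a' => (∑ s, ∑ a, marg d0 P pol t s a * P s a s') * pol s' a'

/-- Normalized discounted state-action occupancy `d_π(s,a)`. -/
noncomputable def occ {S A : Type*} [Fintype S] [Fintype A]
    (γ : ℝ) (d0 : S → ℝ) (P : S → A → S → ℝ) (pol : S → A → ℝ) (s : S) (a : A) : ℝ :=
  (1 - γ) * ∑' t : ℕ, γ ^ t * marg d0 P pol t s a

/-- Expected discounted return `J(π)`. -/
noncomputable def Jret {S A : Type*} [Fintype S] [Fintype A]
    (γ : ℝ) (d0 : S → ℝ) (P : S → A → S → ℝ) (R : S → A → ℝ) (pol : S → A → ℝ) : ℝ :=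
  ∑' t : ℕ, γ ^ t * ∑ s, ∑ a, marg d0 P pol t s a * R s a

/-- Bellman optimality operator `(T Q)(s,a) = R(s,a) + γ Σ_{s'} P(s'|s,a) max_{a'} Q(s',a')`. -/
noncomputable def bellmanT {S A : Type*} [Fintype S] [Fintype A] [Nonempty A]
    (γ : ℝ) (P : S → A → S → ℝ) (R : S → A → ℝ) (Q : S → A → ℝ) (s : S) (a : A) : ℝ :=
  R s a + γ * ∑ s', P s a s' * (⨆ a', Q s' a')

/-- A deterministic policy viewed as a stochastic policy. -/
noncomputable def detPol {S A : Type*} [DecidableEq A] (g : S → A) : S → A → ℝ :=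
  fun s a => if a = g s then 1 else 0

/-!
Telescoping `F` along the trajectory of a policy `π` gives, for every `F : S → A → ℝ`,
`J(π) = E_{d₀}[F(s, π)] + E_{d_π}[R + γ P F(·, π) - F] / (1 - γ)`,
where `F(s, π) = E_{a ∼ π(s)} F(s, a)`. Take `F = Q` for `π` and for the greedy `π_Q`.
For `π_Q` we have `Q(s, π_Q) = max_a Q(s, a)`, so the integrand is exactly `TQ - Q`;
for `π` the integrand is at most `TQ - Q` and the initial term is at most that of `π_Q`.
Subtracting gives `J(π) - J(π_Q) ≤ (E_{d_π}[TQ - Q] + E_{d_{π_Q}}[Q - TQ]) / (1 - γ)`.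
With `π = π_f`, and again with the roles of `(Q, π_Q)` and `(f, π_f)` exchanged,
this bounds `|J(π_f) - J(π_Q)|` by the maximum of the two terms, which is then nonnegative.
-/

open Finset

namespace MDP

variable {S A : Type*}

section Policy

variable [Fintype A]

def policyAvg (pol F : S → A → ℝ) (s : S) : ℝ := ∑ a, pol s a * F s a

lemma policyAvg_le_iSup [Nonempty A] {pol : S → A → ℝ} (hpol : ∀ s, pol s ∈ stdSimplex ℝ A)
    (Q : S → A → ℝ) (s : S) : policyAvg pol Q s ≤ ⨆ a, Q s a :=
  calc ∑ a, pol s a * Q s a ≤ ∑ a, pol s a * ⨆ a, Q s a :=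
        sum_le_sum fun a _ => mul_le_mul_of_nonneg_left
          (le_ciSup (Set.finite_range _).bddAbove a) ((hpol s).1 a)
    _ = ⨆ a, Q s a := by rw [← sum_mul, (hpol s).2, one_mul]

variable [DecidableEq A]

lemma policyAvg_detPol (g : S → A) (F : S → A → ℝ) :
    policyAvg (detPol g) F = fun s => F s (g s) := by
  funext s
  simp [policyAvg, detPol]

lemma detPol_mem_stdSimplex (g : S → A) (s : S) : detPol g s ∈ stdSimplex ℝ A := by
  have h := ite_eq_mem_stdSimplex ℝ (g s)
  simp only [@eq_comm _ (g s)] at h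
  exact h

lemma policyAvg_detPol_of_greedy [Nonempty A] {Q : S → A → ℝ} {g : S → A}
    (hg : ∀ s a, Q s a ≤ Q s (g s)) :
    policyAvg (detPol g) Q = fun s => ⨆ a, Q s a := by
  rw [policyAvg_detPol]
  funext s
  exact le_antisymm (le_ciSup (Set.finite_range _).bddAbove _) (ciSup_le (hg s))

end Policy

section Transition

variable [Fintype S]

def transition (P : S → A → S → ℝ) (V : S → ℝ) (s : S) (a : A) : ℝ :=
  ∑ s', P s a s' * V s'

lemma transition_mono {P : S → A → S → ℝ} (hP : ∀ s a s', 0 ≤ P s a s') {V W : S → ℝ}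
    (hVW : ∀ s, V s ≤ W s) (s : S) (a : A) : transition P V s a ≤ transition P W s a :=
  sum_le_sum fun s' _ => mul_le_mul_of_nonneg_left (hVW s') (hP s a s')

end Transition

lemma summable_geometric_mul_of_abs_le {γ : ℝ} (hγ0 : 0 ≤ γ) (hγ1 : γ < 1) {u : ℕ → ℝ} {C : ℝ}
    (hu : ∀ t, |u t| ≤ C) : Summable fun t => γ ^ t * u t :=
  Summable.of_norm_bounded ((summable_geometric_of_lt_one hγ0 hγ1).mul_right C) fun t => by
    rw [Real.norm_eq_abs, abs_mul, abs_of_nonneg (pow_nonneg hγ0 t)]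
    exact mul_le_mul_of_nonneg_left (hu t) (pow_nonneg hγ0 t)

variable [Fintype S] [Fintype A]

def expect (μ F : S → A → ℝ) : ℝ := ∑ s, ∑ a, μ s a * F s a

lemma expect_add_sub (μ F G H : S → A → ℝ) :
    expect μ (fun s a => F s a + G s a - H s a) = expect μ F + expect μ G - expect μ H := by
  simp only [expect, mul_sub, mul_add, sum_add_distrib, sum_sub_distrib]

lemma expect_const_mul (μ F : S → A → ℝ) (c : ℝ) :
    expect μ (fun s a => c * F s a) = c * expect μ F := by
  simp only [expect, mul_sum, mul_left_comm]

lemma expect_neg (μ F : S → A → ℝ) : expect μ (fun s a => -F s a) = -expect μ F := by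
  simp only [expect, mul_neg, sum_neg_distrib]

lemma expect_mono {μ F G : S → A → ℝ} (hμ : ∀ s a, 0 ≤ μ s a) (hFG : ∀ s a, F s a ≤ G s a) :
    expect μ F ≤ expect μ G :=
  sum_le_sum fun s _ => sum_le_sum fun a _ => mul_le_mul_of_nonneg_left (hFG s a) (hμ s a)

lemma expect_eq_sum_prod (μ F : S → A → ℝ) :
    expect μ F = ∑ x : S × A, Function.uncurry μ x * Function.uncurry F x := by
  simp only [expect, Fintype.sum_prod_type, Function.uncurry_apply_pair]

lemma abs_expect_le {μ : S → A → ℝ} (hμ : Function.uncurry μ ∈ stdSimplex ℝ (S × A))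
    (F : S → A → ℝ) : |expect μ F| ≤ ‖F‖ := by
  rw [expect_eq_sum_prod]
  calc |∑ x : S × A, Function.uncurry μ x * Function.uncurry F x|
      ≤ ∑ x : S × A, Function.uncurry μ x * ‖F‖ := by
        refine (abs_sum_le_sum_abs _ _).trans (sum_le_sum fun x _ => ?_)
        rw [abs_mul, abs_of_nonneg (hμ.1 x)]
        exact mul_le_mul_of_nonneg_left
          ((norm_le_pi_norm (F x.1) x.2).trans (norm_le_pi_norm F x.1)) (hμ.1 x)
    _ = ‖F‖ := by rw [← sum_mul, hμ.2, one_mul]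

section Marginals

variable (d0 : S → ℝ) (P : S → A → S → ℝ) (pol : S → A → ℝ)

lemma expect_marg_zero (F : S → A → ℝ) :
    expect (marg d0 P pol 0) F = ∑ s, d0 s * policyAvg pol F s := by
  simp only [expect, marg, policyAvg, mul_sum, mul_assoc]

lemma expect_marg_succ (t : ℕ) (F : S → A → ℝ) :
    expect (marg d0 P pol (t + 1)) F
      = expect (marg d0 P pol t) (transition P (policyAvg pol F)) := by
  have hsucc : ∀ s' a', marg d0 P pol (t + 1) s' a'
      = (∑ s, ∑ a, marg d0 P pol t s a * P s a s') * pol s' a' := fun _ _ => rfl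
  simp only [expect, transition, hsucc, mul_assoc, ← mul_sum]
  change ∑ s', (∑ s, ∑ a, marg d0 P pol t s a * P s a s') * policyAvg pol F s' = _
  simp only [sum_mul, mul_sum, mul_assoc]
  rw [sum_comm]
  exact sum_congr rfl fun _ _ => sum_comm

variable {d0 P pol}

lemma marg_mem_stdSimplex (hd0 : d0 ∈ stdSimplex ℝ S) (hP : ∀ s a, P s a ∈ stdSimplex ℝ S)
    (hpol : ∀ s, pol s ∈ stdSimplex ℝ A) (t : ℕ) :
    Function.uncurry (marg d0 P pol t) ∈ stdSimplex ℝ (S × A) := by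
  have hone : ∀ μ : S → A → ℝ, ∑ x : S × A, Function.uncurry μ x = expect μ (fun _ _ => 1) := by
    simp [expect_eq_sum_prod, Function.uncurry_def]
  have havg : policyAvg pol (fun _ _ => 1) = fun _ => 1 := by
    funext s; simpa [policyAvg] using (hpol s).2
  have htrans : transition P (fun _ => (1 : ℝ)) = fun (_ : S) (_ : A) => 1 := by
    funext s a; simpa [transition] using (hP s a).2
  induction t with
  | zero =>
    refine ⟨fun x => mul_nonneg (hd0.1 x.1) ((hpol x.1).1 x.2), ?_⟩
    rw [hone, expect_marg_zero, havg]
    simpa using hd0.2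
  | succ t ih =>
    refine ⟨fun x => mul_nonneg ?_ ((hpol x.1).1 x.2), ?_⟩
    · exact sum_nonneg fun s _ => sum_nonneg fun a _ =>
        mul_nonneg (ih.1 (s, a)) ((hP s a).1 x.1)
    · rw [hone, expect_marg_succ, havg, htrans, ← hone, ih.2]

end Marginals

section Discounted

variable {γ : ℝ} (hγ0 : 0 ≤ γ) (hγ1 : γ < 1)
  {d0 : S → ℝ} {P : S → A → S → ℝ} {pol : S → A → ℝ}
  (hd0 : d0 ∈ stdSimplex ℝ S) (hP : ∀ s a, P s a ∈ stdSimplex ℝ S)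
  (hpol : ∀ s, pol s ∈ stdSimplex ℝ A)
include hγ0 hγ1 hd0 hP hpol

lemma expect_occ (G : S → A → ℝ) :
    expect (occ γ d0 P pol) G = (1 - γ) * ∑' t, γ ^ t * expect (marg d0 P pol t) G := by
  have hmarg := marg_mem_stdSimplex hd0 hP hpol
  have hbound : ∀ t s a, |marg d0 P pol t s a| ≤ 1 := fun t s a =>
    (abs_of_nonneg ((hmarg t).1 (s, a))).trans_le (mem_Icc_of_mem_stdSimplex (hmarg t) (s, a)).2
  have hsum : ∀ s a, Summable fun t => γ ^ t * (marg d0 P pol t s a * G s a) := fun s a =>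
    ((summable_geometric_mul_of_abs_le hγ0 hγ1 fun t => hbound t s a).mul_right (G s a)).congr
      fun t => mul_assoc _ _ _
  simp only [expect, occ, mul_sum]
  rw [Summable.tsum_finsetSum fun s _ => summable_sum fun a _ => hsum s a, mul_sum]
  refine sum_congr rfl fun s _ => ?_
  rw [Summable.tsum_finsetSum fun a _ => hsum s a, mul_sum]
  refine sum_congr rfl fun a _ => ?_
  rw [mul_assoc, ← tsum_mul_right]
  simp only [mul_assoc]

lemma summable_discounted_expect_marg (F : S → A → ℝ) :
    Summable fun t => γ ^ t * expect (marg d0 P pol t) F :=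
  summable_geometric_mul_of_abs_le hγ0 hγ1 fun t =>
    abs_expect_le (marg_mem_stdSimplex hd0 hP hpol t) F

lemma Jret_eq_add_expect_occ (R F : S → A → ℝ) :
    Jret γ d0 P R pol = ∑ s, d0 s * policyAvg pol F s
      + expect (occ γ d0 P pol)
          (fun s a => R s a + γ * transition P (policyAvg pol F) s a - F s a) / (1 - γ) := by
  set e : ℕ → ℝ := fun t => γ ^ t * expect (marg d0 P pol t) F
  have he : Summable e := summable_discounted_expect_marg hγ0 hγ1 hd0 hP hpol F
  have he' : Summable fun t => e (t + 1) := (summable_nat_add_iff 1).2 he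
  have hstep : ∀ t, γ ^ t * expect (marg d0 P pol t)
        (fun s a => R s a + γ * transition P (policyAvg pol F) s a - F s a)
      = γ ^ t * expect (marg d0 P pol t) R + (e (t + 1) - e t) := by
    intro t
    rw [expect_add_sub, expect_const_mul, ← expect_marg_succ]
    simp only [e]
    ring
  have htelescope : ∑' t, (e (t + 1) - e t) = -e 0 := by
    rw [he'.tsum_sub he, he.tsum_eq_zero_add]
    ring
  rw [expect_occ hγ0 hγ1 hd0 hP hpol, mul_div_cancel_left₀ _ (sub_ne_zero.2 hγ1.ne'),
    tsum_congr hstep, (summable_discounted_expect_marg hγ0 hγ1 hd0 hP hpol R).tsum_add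
      (he'.sub he), htelescope]
  simp only [e, pow_zero, one_mul, expect_marg_zero]
  unfold Jret expect
  ring

lemma occ_nonneg (s : S) (a : A) : 0 ≤ occ γ d0 P pol s a :=
  mul_nonneg (sub_nonneg.2 hγ1.le) (tsum_nonneg fun t =>
    mul_nonneg (pow_nonneg hγ0 t) ((marg_mem_stdSimplex hd0 hP hpol t).1 (s, a)))

end Discounted

lemma Jret_sub_Jret_greedy_le [DecidableEq A] [Nonempty A] {γ : ℝ} (hγ0 : 0 ≤ γ) (hγ1 : γ < 1)
    {d0 : S → ℝ} {P : S → A → S → ℝ} {pol : S → A → ℝ} (hd0 : d0 ∈ stdSimplex ℝ S)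
    (hP : ∀ s a, P s a ∈ stdSimplex ℝ S) (hpol : ∀ s, pol s ∈ stdSimplex ℝ A)
    (R Q : S → A → ℝ) {g : S → A} (hg : ∀ s a, Q s a ≤ Q s (g s)) :
    Jret γ d0 P R pol - Jret γ d0 P R (detPol g)
      ≤ (expect (occ γ d0 P pol) (fun s a => bellmanT γ P R Q s a - Q s a)
        + expect (occ γ d0 P (detPol g)) (fun s a => Q s a - bellmanT γ P R Q s a)) / (1 - γ) := by
  have hdet := detPol_mem_stdSimplex (S := S) g
  have hT : ∀ s a, bellmanT γ P R Q s a
      = R s a + γ * transition P (fun s' => ⨆ a', Q s' a') s a := fun _ _ => rfl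
  have hstart : ∑ s, d0 s * policyAvg pol Q s ≤ ∑ s, d0 s * ⨆ a, Q s a :=
    sum_le_sum fun s _ => mul_le_mul_of_nonneg_left (policyAvg_le_iSup hpol Q s) (hd0.1 s)
  have hadv : expect (occ γ d0 P pol)
        (fun s a => R s a + γ * transition P (policyAvg pol Q) s a - Q s a)
      ≤ expect (occ γ d0 P pol) (fun s a => bellmanT γ P R Q s a - Q s a) :=
    expect_mono (occ_nonneg hγ0 hγ1 hd0 hP hpol) fun s a => by
      rw [hT]
      gcongr
      exact transition_mono (fun s a s' => (hP s a).1 s') (policyAvg_le_iSup hpol Q) s a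
  have hgreedy : expect (occ γ d0 P (detPol g)) (fun s a => Q s a - bellmanT γ P R Q s a)
      = -expect (occ γ d0 P (detPol g))
          (fun s a => R s a + γ * transition P (policyAvg (detPol g) Q) s a - Q s a) := by
    rw [← expect_neg, policyAvg_detPol_of_greedy hg]
    simp only [hT, neg_sub]
  rw [Jret_eq_add_expect_occ hγ0 hγ1 hd0 hP hpol R Q,
    Jret_eq_add_expect_occ hγ0 hγ1 hd0 hP hdet R Q, hgreedy, policyAvg_detPol_of_greedy hg]
  have hadv' := div_le_div_of_nonneg_right hadv (sub_nonneg.2 hγ1.le)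
  rw [add_div, neg_div]
  linarith

end MDP

/-- Two-sided performance difference bound. -/
theorem stmt4 {S A : Type*} [Fintype S] [Fintype A] [Nonempty A] [DecidableEq A]
    (γ : ℝ) (hγ0 : 0 ≤ γ) (hγ1 : γ < 1)
    (d0 : S → ℝ) (hd0 : ∀ s, 0 ≤ d0 s) (hd0sum : ∑ s, d0 s = 1)
    (P : S → A → S → ℝ) (hP : ∀ s a s', 0 ≤ P s a s') (hPsum : ∀ s a, ∑ s', P s a s' = 1)
    (R : S → A → ℝ)
    (Q f : S → A → ℝ)
    (gQ : S → A) (hgQ : ∀ s a, Q s a ≤ Q s (gQ s))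
    (gf : S → A) (hgf : ∀ s a, f s a ≤ f s (gf s)) :
    |Jret γ d0 P R (detPol gf) - Jret γ d0 P R (detPol gQ)|
      ≤ 2 * max
        (((∑ s, ∑ a, occ γ d0 P (detPol gf) s a * (bellmanT γ P R Q s a - Q s a))
          + (∑ s, ∑ a, occ γ d0 P (detPol gQ) s a * (Q s a - bellmanT γ P R Q s a))) / (1 - γ))
        (((∑ s, ∑ a, occ γ d0 P (detPol gQ) s a * (bellmanT γ P R f s a - f s a))
          + (∑ s, ∑ a, occ γ d0 P (detPol gf) s a * (f s a - bellmanT γ P R f s a))) / (1 - γ)) := by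
  have hd0' : d0 ∈ stdSimplex ℝ S := ⟨hd0, hd0sum⟩
  have hP' : ∀ s a, P s a ∈ stdSimplex ℝ S := fun s a => ⟨hP s a, hPsum s a⟩
  have hQ := MDP.Jret_sub_Jret_greedy_le hγ0 hγ1 hd0' hP' (MDP.detPol_mem_stdSimplex gf) R Q hgQ
  have hf := MDP.Jret_sub_Jret_greedy_le hγ0 hγ1 hd0' hP' (MDP.detPol_mem_stdSimplex gQ) R f hgf
  have hmax := abs_sub_le_iff.2 ⟨hQ.trans (le_max_left _ _), hf.trans (le_max_right _ _)⟩
  exact hmax.trans (le_mul_of_one_le_left ((abs_nonneg _).trans hmax) one_le_two)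
end

section
/- Performance loss with respect to a class: for a class Q of functions S × A → ℝ with induced greedy policy class Π_Q = {π_Q : Q ∈ Q}, for any Q ∈ Q, max_{π ∈ Π_Q} J(π) − J(π_Q) ≤ (2/(1-γ)) · max_{π ∈ Π_Q} |E_{d_π}[TQ − Q]|. -/
open scoped BigOperators

/-!
Telescoping the Bellman residual along the marginals `μ_t` of a policy `π` gives, with
`V s = max_a Q(s,a)`,
`E_{d_π}[TQ - Q] = (1 - γ) (J(π) - E_{d₀} V + Σ_t γ^t E_{μ_t}[V - Q])`.
The last sum is nonnegative, and it vanishes when `π` is greedy for `Q`. Hence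
`(1 - γ) (J(π) - J(π_Q)) ≤ E_{d_π}[TQ - Q] - E_{d_{π_Q}}[TQ - Q]`, and each of the two
residuals is bounded by the maximum over the class.
-/

noncomputable def margExp {S A : Type*} [Fintype S] [Fintype A]
    (d0 : S → ℝ) (P : S → A → S → ℝ) (pol : S → A → ℝ) (t : ℕ) (f : S → A → ℝ) : ℝ :=
  ∑ s, ∑ a, marg d0 P pol t s a * f s a

lemma detPol_mem_stdSimplex {S A : Type*} [Fintype A] [DecidableEq A] (g : S → A) (s : S) :
    detPol g s ∈ stdSimplex ℝ A :=
  ⟨fun a => by unfold detPol; split_ifs <;> norm_num, by simp [detPol]⟩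

section marginals

variable {S A : Type*} [Fintype S] [Fintype A]
  {d0 : S → ℝ} {P : S → A → S → ℝ} {pol : S → A → ℝ}

lemma margExp_add (t : ℕ) (f g : S → A → ℝ) :
    margExp d0 P pol t (fun s a => f s a + g s a)
      = margExp d0 P pol t f + margExp d0 P pol t g := by
  simp only [margExp, mul_add, Finset.sum_add_distrib]

lemma margExp_sub (t : ℕ) (f g : S → A → ℝ) :
    margExp d0 P pol t (fun s a => f s a - g s a)
      = margExp d0 P pol t f - margExp d0 P pol t g := by
  simp only [margExp, mul_sub, Finset.sum_sub_distrib]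

lemma margExp_const_mul (t : ℕ) (c : ℝ) (f : S → A → ℝ) :
    margExp d0 P pol t (fun s a => c * f s a) = c * margExp d0 P pol t f := by
  simp only [margExp, Finset.mul_sum, mul_left_comm c]

lemma marg_nonneg (hd0 : d0 ∈ stdSimplex ℝ S) (hP : ∀ s a, P s a ∈ stdSimplex ℝ S)
    (hpol : ∀ s, pol s ∈ stdSimplex ℝ A) (t : ℕ) (s : S) (a : A) :
    0 ≤ marg d0 P pol t s a := by
  induction t generalizing s a with
  | zero => exact mul_nonneg (hd0.1 s) ((hpol s).1 a)
  | succ t ih =>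
    exact mul_nonneg (Finset.sum_nonneg fun s' _ => Finset.sum_nonneg fun a' _ =>
      mul_nonneg (ih s' a') ((hP s' a').1 s)) ((hpol s).1 a)

lemma margExp_succ_of_state (hpol : ∀ s, pol s ∈ stdSimplex ℝ A) (t : ℕ) (V : S → ℝ) :
    margExp d0 P pol (t + 1) (fun s _ => V s)
      = margExp d0 P pol t (fun s a => ∑ s', P s a s' * V s') := by
  have hmarg (s' : S) : ∑ a', marg d0 P pol (t + 1) s' a' * V s'
      = ∑ s, ∑ a, marg d0 P pol t s a * P s a s' * V s' := by
    simp only [marg, ← Finset.sum_mul, ← Finset.mul_sum, (hpol s').2, mul_one]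
  simp only [margExp, hmarg, Finset.mul_sum, mul_assoc]
  rw [Finset.sum_comm]
  exact Finset.sum_congr rfl fun s _ => Finset.sum_comm

lemma margExp_zero_of_state (hpol : ∀ s, pol s ∈ stdSimplex ℝ A) (V : S → ℝ) :
    margExp d0 P pol 0 (fun s _ => V s) = ∑ s, d0 s * V s := by
  simp only [margExp, marg, mul_right_comm _ _ (V _), ← Finset.mul_sum, (hpol _).2, mul_one]

lemma margExp_one (hd0 : d0 ∈ stdSimplex ℝ S) (hP : ∀ s a, P s a ∈ stdSimplex ℝ S)
    (hpol : ∀ s, pol s ∈ stdSimplex ℝ A) (t : ℕ) :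
    margExp d0 P pol t (fun _ _ => 1) = 1 := by
  induction t with
  | zero => simpa [hd0.2] using margExp_zero_of_state (d0 := d0) (P := P) hpol fun _ => 1
  | succ t ih =>
    rw [margExp_succ_of_state hpol t fun _ => 1]
    simpa [(hP _ _).2] using ih

lemma marg_le_one (hd0 : d0 ∈ stdSimplex ℝ S) (hP : ∀ s a, P s a ∈ stdSimplex ℝ S)
    (hpol : ∀ s, pol s ∈ stdSimplex ℝ A) (t : ℕ) (s : S) (a : A) :
    marg d0 P pol t s a ≤ 1 := by
  have h0 := marg_nonneg hd0 hP hpol t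
  have htot := margExp_one hd0 hP hpol t
  simp only [margExp, mul_one] at htot
  calc marg d0 P pol t s a ≤ ∑ b, marg d0 P pol t s b :=
        Finset.single_le_sum (fun b _ => h0 s b) (Finset.mem_univ a)
    _ ≤ ∑ s', ∑ b, marg d0 P pol t s' b :=
        Finset.single_le_sum (f := fun s' => ∑ b, marg d0 P pol t s' b)
          (fun s' _ => Finset.sum_nonneg fun b _ => h0 s' b) (Finset.mem_univ s)
    _ = 1 := htot

lemma abs_margExp_le (hd0 : d0 ∈ stdSimplex ℝ S) (hP : ∀ s a, P s a ∈ stdSimplex ℝ S)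
    (hpol : ∀ s, pol s ∈ stdSimplex ℝ A) (t : ℕ) (f : S → A → ℝ) :
    |margExp d0 P pol t f| ≤ ∑ s, ∑ a, |f s a| := by
  refine (Finset.abs_sum_le_sum_abs _ _).trans (Finset.sum_le_sum fun s _ =>
    (Finset.abs_sum_le_sum_abs _ _).trans (Finset.sum_le_sum fun a _ => ?_))
  rw [abs_mul, abs_of_nonneg (marg_nonneg hd0 hP hpol t s a)]
  exact mul_le_of_le_one_left (abs_nonneg _) (marg_le_one hd0 hP hpol t s a)

lemma marg_detPol_of_ne [DecidableEq A] {g : S → A} {s : S} {a : A} (h : a ≠ g s) (t : ℕ) :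
    marg d0 P (detPol g) t s a = 0 := by
  cases t <;> simp [marg, detPol, h]

end marginals

lemma summable_pow_mul_of_abs_le {γ C : ℝ} (hγ0 : 0 ≤ γ) (hγ1 : γ < 1) {x : ℕ → ℝ}
    (hx : ∀ t, |x t| ≤ C) : Summable fun t => γ ^ t * x t := by
  refine ((summable_geometric_of_lt_one hγ0 hγ1).mul_right C).of_norm_bounded fun t => ?_
  rw [Real.norm_eq_abs, abs_mul, abs_pow, abs_of_nonneg hγ0]
  exact mul_le_mul_of_nonneg_left (hx t) (pow_nonneg hγ0 t)

section discounted

variable {S A : Type*} [Fintype S] [Fintype A] {γ : ℝ}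
  {d0 : S → ℝ} {P : S → A → S → ℝ} {pol : S → A → ℝ}

lemma sum_occ_mul (hγ0 : 0 ≤ γ) (hγ1 : γ < 1) (hd0 : d0 ∈ stdSimplex ℝ S)
    (hP : ∀ s a, P s a ∈ stdSimplex ℝ S) (hpol : ∀ s, pol s ∈ stdSimplex ℝ A)
    (f : S → A → ℝ) :
    ∑ s, ∑ a, occ γ d0 P pol s a * f s a
      = (1 - γ) * ∑' t, γ ^ t * margExp d0 P pol t f := by
  have hsum (s : S) (a : A) : Summable fun t => γ ^ t * (marg d0 P pol t s a * f s a) := by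
    simp only [← mul_assoc]
    exact (summable_pow_mul_of_abs_le hγ0 hγ1 fun t => by
      rw [abs_of_nonneg (marg_nonneg hd0 hP hpol t s a)]
      exact marg_le_one hd0 hP hpol t s a).mul_right _
  simp only [occ, margExp, mul_assoc, ← tsum_mul_right, ← Finset.mul_sum]
  congr 1
  simp only [Finset.mul_sum]
  rw [Summable.tsum_finsetSum fun s _ => summable_sum fun a _ => hsum s a]
  exact Finset.sum_congr rfl fun s _ => (Summable.tsum_finsetSum fun a _ => hsum s a).symm

lemma summable_pow_mul_margExp (hγ0 : 0 ≤ γ) (hγ1 : γ < 1) (hd0 : d0 ∈ stdSimplex ℝ S)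
    (hP : ∀ s a, P s a ∈ stdSimplex ℝ S) (hpol : ∀ s, pol s ∈ stdSimplex ℝ A)
    (f : S → A → ℝ) : Summable fun t => γ ^ t * margExp d0 P pol t f :=
  summable_pow_mul_of_abs_le hγ0 hγ1 (abs_margExp_le hd0 hP hpol · f)

lemma sum_occ_mul_bellman_residual (hγ0 : 0 ≤ γ) (hγ1 : γ < 1) (hd0 : d0 ∈ stdSimplex ℝ S)
    (hP : ∀ s a, P s a ∈ stdSimplex ℝ S) (hpol : ∀ s, pol s ∈ stdSimplex ℝ A)
    (R Q : S → A → ℝ) (V : S → ℝ) :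
    ∑ s, ∑ a, occ γ d0 P pol s a * (R s a + γ * ∑ s', P s a s' * V s' - Q s a)
      = (1 - γ) * (Jret γ d0 P R pol - ∑ s, d0 s * V s
          + ∑' t, γ ^ t * margExp d0 P pol t (fun s a => V s - Q s a)) := by
  rw [sum_occ_mul hγ0 hγ1 hd0 hP hpol]
  congr 1
  set x := fun t => margExp d0 P pol t R
  set y := fun t => margExp d0 P pol t (fun s _ => V s)
  set z := fun t => margExp d0 P pol t Q
  have hsum := summable_pow_mul_margExp hγ0 hγ1 hd0 hP hpol
  have hy : Summable fun t => γ ^ t * y t := hsum _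
  have hterm (t : ℕ) : γ ^ t * margExp d0 P pol t
      (fun s a => R s a + γ * ∑ s', P s a s' * V s' - Q s a)
        = γ ^ t * x t + γ ^ (t + 1) * y (t + 1) - γ ^ t * z t := by
    rw [margExp_sub, margExp_add, margExp_const_mul, ← margExp_succ_of_state hpol]
    ring
  have hgap (t : ℕ) : γ ^ t * margExp d0 P pol t (fun s a => V s - Q s a)
      = γ ^ t * y t - γ ^ t * z t := by
    rw [margExp_sub, mul_sub]
  have hshift : ∑' t, γ ^ (t + 1) * y (t + 1) = ∑' t, γ ^ t * y t - y 0 := by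
    rw [hy.tsum_eq_zero_add, pow_zero, one_mul, add_sub_cancel_left]
  have hy0 : y 0 = ∑ s, d0 s * V s := margExp_zero_of_state hpol V
  rw [tsum_congr hterm, tsum_congr hgap,
    Summable.tsum_sub ((hsum R).add ((summable_nat_add_iff 1).mpr hy)) (hsum Q),
    Summable.tsum_add (hsum R) ((summable_nat_add_iff 1).mpr hy), hshift,
    Summable.tsum_sub hy (hsum Q), ← hy0, show Jret γ d0 P R pol = ∑' t, γ ^ t * x t from rfl]
  ring

end discounted

section greedy

variable {S A : Type*} [Fintype S] [Fintype A] {d0 : S → ℝ} {P : S → A → S → ℝ}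

lemma margExp_iSup_sub_nonneg {pol : S → A → ℝ} (hd0 : d0 ∈ stdSimplex ℝ S)
    (hP : ∀ s a, P s a ∈ stdSimplex ℝ S) (hpol : ∀ s, pol s ∈ stdSimplex ℝ A)
    (Q : S → A → ℝ) (t : ℕ) :
    0 ≤ margExp d0 P pol t (fun s a => (⨆ a', Q s a') - Q s a) :=
  Finset.sum_nonneg fun s _ => Finset.sum_nonneg fun a _ =>
    mul_nonneg (marg_nonneg hd0 hP hpol t s a)
      (sub_nonneg.mpr (le_ciSup (Set.finite_range _).bddAbove a))

lemma margExp_detPol_iSup_sub [Nonempty A] [DecidableEq A] {Q : S → A → ℝ} {g : S → A}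
    (hg : ∀ s a, Q s a ≤ Q s (g s)) (t : ℕ) :
    margExp d0 P (detPol g) t (fun s a => (⨆ a', Q s a') - Q s a) = 0 := by
  refine Finset.sum_eq_zero fun s _ => Finset.sum_eq_zero fun a _ => ?_
  beta_reduce
  rcases eq_or_ne a (g s) with rfl | h
  · rw [le_antisymm (ciSup_le (hg s)) (le_ciSup (Set.finite_range _).bddAbove _), sub_self,
      mul_zero]
  · rw [marg_detPol_of_ne h, zero_mul]

variable [Nonempty A] {γ : ℝ}

lemma mul_Jret_sub_le_sum_occ_mul_bellman_residual {pol : S → A → ℝ} (hγ0 : 0 ≤ γ)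
    (hγ1 : γ < 1) (hd0 : d0 ∈ stdSimplex ℝ S) (hP : ∀ s a, P s a ∈ stdSimplex ℝ S)
    (hpol : ∀ s, pol s ∈ stdSimplex ℝ A) (R Q : S → A → ℝ) :
    (1 - γ) * (Jret γ d0 P R pol - ∑ s, d0 s * ⨆ a, Q s a)
      ≤ ∑ s, ∑ a, occ γ d0 P pol s a * (bellmanT γ P R Q s a - Q s a) := by
  simp only [bellmanT]
  rw [sum_occ_mul_bellman_residual hγ0 hγ1 hd0 hP hpol R Q fun s => ⨆ a, Q s a]
  refine mul_le_mul_of_nonneg_left (le_add_of_nonneg_right (tsum_nonneg fun t => ?_))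
    (sub_nonneg.mpr hγ1.le)
  exact mul_nonneg (pow_nonneg hγ0 t) (margExp_iSup_sub_nonneg hd0 hP hpol Q t)

lemma sum_occ_detPol_mul_bellman_residual [DecidableEq A] {g : S → A} (hγ0 : 0 ≤ γ)
    (hγ1 : γ < 1) (hd0 : d0 ∈ stdSimplex ℝ S) (hP : ∀ s a, P s a ∈ stdSimplex ℝ S)
    (R : S → A → ℝ) {Q : S → A → ℝ} (hg : ∀ s a, Q s a ≤ Q s (g s)) :
    ∑ s, ∑ a, occ γ d0 P (detPol g) s a * (bellmanT γ P R Q s a - Q s a)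
      = (1 - γ) * (Jret γ d0 P R (detPol g) - ∑ s, d0 s * ⨆ a, Q s a) := by
  simp only [bellmanT]
  rw [sum_occ_mul_bellman_residual hγ0 hγ1 hd0 hP (detPol_mem_stdSimplex g) R Q
    fun s => ⨆ a, Q s a]
  simp only [margExp_detPol_iSup_sub hg, mul_zero, tsum_zero, add_zero]

end greedy

theorem stmt5_general {S A ι : Type*} [Fintype S] [Fintype A] [Nonempty A] [DecidableEq A]
    [Fintype ι] [Nonempty ι]
    (γ : ℝ) (hγ0 : 0 ≤ γ) (hγ1 : γ < 1)
    (d0 : S → ℝ) (hd0 : ∀ s, 0 ≤ d0 s) (hd0sum : ∑ s, d0 s = 1)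
    (P : S → A → S → ℝ) (hP : ∀ s a s', 0 ≤ P s a s') (hPsum : ∀ s a, ∑ s', P s a s' = 1)
    (R : S → A → ℝ)
    (Qs : ι → S → A → ℝ)
    (g : ι → S → A) (hg : ∀ i s a, Qs i s a ≤ Qs i s (g i s)) (i : ι) :
    (⨆ j, Jret γ d0 P R (detPol (g j))) - Jret γ d0 P R (detPol (g i))
      ≤ (2 / (1 - γ)) *
        ⨆ j, |∑ s, ∑ a, occ γ d0 P (detPol (g j)) s a *
          (bellmanT γ P R (Qs i) s a - Qs i s a)| := by
  have hd0' : d0 ∈ stdSimplex ℝ S := ⟨hd0, hd0sum⟩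
  have hP' (s : S) (a : A) : P s a ∈ stdSimplex ℝ S := ⟨hP s a, hPsum s a⟩
  set E := fun j => ∑ s, ∑ a, occ γ d0 P (detPol (g j)) s a *
    (bellmanT γ P R (Qs i) s a - Qs i s a)
  have hE (j : ι) : |E j| ≤ ⨆ j, |E j| :=
    le_ciSup (f := fun j => |E j|) (Set.finite_range _).bddAbove j
  have hgap (j : ι) : (1 - γ) * (Jret γ d0 P R (detPol (g j)) - Jret γ d0 P R (detPol (g i)))
      ≤ E j - E i := by
    have hj := mul_Jret_sub_le_sum_occ_mul_bellman_residual hγ0 hγ1 hd0' hP'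
      (detPol_mem_stdSimplex (g j)) R (Qs i)
    have hi := sum_occ_detPol_mul_bellman_residual hγ0 hγ1 hd0' hP' R (hg i)
    linarith [mul_sub (1 - γ) (Jret γ d0 P R (detPol (g j)) - ∑ s, d0 s * ⨆ a, Qs i s a)
      (Jret γ d0 P R (detPol (g i)) - ∑ s, d0 s * ⨆ a, Qs i s a)]
  change _ ≤ 2 / (1 - γ) * ⨆ j, |E j|
  rw [sub_le_iff_le_add]
  refine ciSup_le fun j => ?_
  have hloss : Jret γ d0 P R (detPol (g j)) - Jret γ d0 P R (detPol (g i))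
      ≤ 2 / (1 - γ) * ⨆ j, |E j| := by
    rw [div_mul_eq_mul_div, le_div_iff₀ (by linarith), mul_comm]
    linarith [hgap j, hE j, hE i, le_abs_self (E j), neg_abs_le (E i)]
  linarith

/-- Performance loss w.r.t. a class:
    `max_{π∈Π_Q} J(π) - J(π_Q) ≤ (2/(1-γ)) max_{π∈Π_Q} |E_{d_π}[TQ - Q]|`. -/
theorem stmt5 {S A ι : Type*} [Fintype S] [Fintype A] [Nonempty A] [DecidableEq A]
    [Fintype ι] [Nonempty ι]
    (γ : ℝ) (hγ0 : 0 ≤ γ) (hγ1 : γ < 1)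
    (d0 : S → ℝ) (hd0 : ∀ s, 0 ≤ d0 s) (hd0sum : ∑ s, d0 s = 1)
    (P : S → A → S → ℝ) (hP : ∀ s a s', 0 ≤ P s a s') (hPsum : ∀ s a, ∑ s', P s a s' = 1)
    (R : S → A → ℝ) (Vmax : ℝ)
    (Qs : ι → S → A → ℝ) (hQs : ∀ i s a, Qs i s a ∈ Set.Icc (0 : ℝ) Vmax)
    (g : ι → S → A) (hg : ∀ i s a, Qs i s a ≤ Qs i s (g i s)) (i : ι) :
    (⨆ j, Jret γ d0 P R (detPol (g j))) - Jret γ d0 P R (detPol (g i))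
      ≤ (2 / (1 - γ)) *
        ⨆ j, |∑ s, ∑ a, occ γ d0 P (detPol (g j)) s a *
          (bellmanT γ P R (Qs i) s a - Qs i s a)| :=
  stmt5_general γ hγ0 hγ1 d0 hd0 hd0sum P hP hPsum R Qs g hg i
end
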